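/- arXiv:2303.08596 — 4 statements merged into one kernel-verified Lean document; each statement's English description precedes it below -/
import Mathlib

section
/- Fourier–Pontryagin duality, spin side on vertices (Lemma 2.2, case # = ★): For every ε ∈ ℝ^E one has Σ_{𝐧 ∈ ℤ^E, d*𝐧 = 0} e^{i(𝐧,ε)} Π_{e∈E} e^{−𝒱(𝐧_e)} = ∫_{(ℝ/2πℤ)^V} Π_{e∈E} w((dθ)_e + ε_e) dθ, where dθ is the product of Haar probability measures on (ℝ/2πℤ)^V and w is extended 2π-periodically to ℝ. In particular, writing Z_★(ε) for the right-hand side, the characteristic function of the ⋄-height measure satisfies ν_⋄[e^{i(𝐧,ε)}] = Z_★(ε)/Z_★(0). -/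
open MeasureTheory Real
noncomputable section

/-- Gradient of a `G`-valued function on the vertices: `(df)_e = f(tgt e) - f(src e)`. -/
def grad {V E G : Type*} [AddCommGroup G] (src tgt : E → V) (f : V → G) : E → G :=
  fun e => f (tgt e) - f (src e)

/-- Divergence of a `G`-valued 1-form: `(d*ω)_x = Σ_{e : tgt e = x} ω_e - Σ_{e : src e = x} ω_e`. -/
def divg {V E G : Type*} [Fintype E] [DecidableEq V] [AddCommGroup G]
    (src tgt : E → V) (ω : E → G) : V → G :=
  fun x => (∑ e, if tgt e = x then ω e else 0) - ∑ e, if src e = x then ω e else 0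

/-- The spin weight `w(α) = Σ_{n∈ℤ} e^{-𝒱(n)} e^{inα}`, written with `p n = e^{-𝒱(n)}`;
since `p` is symmetric this real (cosine) form agrees with the exponential form. -/
def wgt (p : ℤ → ℝ) (α : ℝ) : ℝ := ∑' n : ℤ, p n * Real.cos (n * α)

/-- Coordinates for the torus `(ℝ/2πℤ)^V`: the product over `V` of Lebesgue measure on the
fundamental domain `(-π, π]`.  It has total mass `(2π)^{|V|}`, so dividing by `(2π)^{|V|}`
gives the Haar probability measure of the torus. -/
def torusBox (V : Type*) [Fintype V] : Measure (V → ℝ) :=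
  Measure.pi fun _ => volume.restrict (Set.Ioc (-π) π)

/-!
Expand each weight `w((dθ)_e + ε_e)` into its Fourier series `Σ_m p(m) e^{im((dθ)_e + ε_e)}`
(the series is real because `p` is even). The product over the edges becomes an absolutely
convergent sum over `n ∈ ℤ^E` of `e^{i(n,ε)} Π_e p(n_e) · e^{i(d*n, θ)}`, since `(n, dθ) = (d*n, θ)`.
Integrated over the torus, the character `θ ↦ e^{i(d*n, θ)}` gives `(2π)^{|V|}` if `d*n = 0` and
`0` otherwise, so term-by-term integration leaves exactly the divergence-free `n`. The formula for
the characteristic function is the quotient of the cases `ε` and `0`.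
-/

theorem summable_of_summable_sq_mul {p : ℤ → ℝ}
    (hsum : Summable fun n : ℤ => (n : ℝ) ^ 2 * p n) : Summable p := by
  refine hsum.abs.of_norm_bounded_eventually ?_
  filter_upwards [(Set.finite_singleton (0 : ℤ)).compl_mem_cofinite] with n hn
  have h1 : (1 : ℤ) ≤ n ^ 2 := by nlinarith [Int.one_le_abs (by simpa using hn), sq_abs n]
  rw [Real.norm_eq_abs, abs_mul, abs_of_nonneg (sq_nonneg (n : ℝ))]
  exact le_mul_of_one_le_left (abs_nonneg _) (by exact_mod_cast h1)

section ProdTsum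

variable {R κ : Type*} [NormedCommRing R] [CompleteSpace R]

theorem summable_norm_and_hasSum_prod_fin {k : ℕ} (g : Fin k → κ → R)
    (hg : ∀ i, Summable fun m => ‖g i m‖) :
    Summable (fun n : Fin k → κ => ‖∏ i, g i (n i)‖) ∧
      HasSum (fun n : Fin k → κ => ∏ i, g i (n i)) (∏ i, ∑' m, g i m) := by
  induction k with
  | zero =>
    simp only [Finset.univ_eq_empty, Finset.prod_empty]
    exact ⟨.of_finite, by simp⟩
  | succ k ih =>
    obtain ⟨ihS, ihH⟩ := ih (fun i => g i.succ) fun i => hg i.succ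
    let e := Fin.consEquiv fun _ : Fin (k + 1) => κ
    have hsplit (q : κ × (Fin k → κ)) :
        ∏ i, g i (e q i) = g 0 q.1 * ∏ i : Fin k, g i.succ (q.2 i) := by
      simp [e, Fin.prod_univ_succ]
    rw [← e.summable_iff, ← e.hasSum_iff, Fin.prod_univ_succ]
    simp only [Function.comp_def, hsplit]
    have hS := (hg 0).mul_norm ihS
    have hH := (hg 0).of_norm.hasSum.mul ihH hS.of_norm
    exact ⟨hS, hH⟩

theorem summable_norm_and_hasSum_prod {ι : Type*} [Fintype ι] (g : ι → κ → R)
    (hg : ∀ i, Summable fun m => ‖g i m‖) :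
    Summable (fun n : ι → κ => ‖∏ i, g i (n i)‖) ∧
      HasSum (fun n : ι → κ => ∏ i, g i (n i)) (∏ i, ∑' m, g i m) := by
  let e := Fintype.equivFin ι
  let E : (Fin (Fintype.card ι) → κ) ≃ (ι → κ) := e.symm.arrowCongr (Equiv.refl κ)
  have hE (n : Fin (Fintype.card ι) → κ) : ∏ i, g i (E n i) = ∏ j, g (e.symm j) (n j) := by
    simp [E, ← e.symm.prod_comp]
  rw [← E.summable_iff, ← E.hasSum_iff, ← e.symm.prod_comp]
  simp only [Function.comp_def, hE]
  exact summable_norm_and_hasSum_prod_fin _ fun j => hg (e.symm j)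

end ProdTsum

theorem ofReal_wgt_eq_tsum_exp {p : ℤ → ℝ} (hsym : ∀ n, p (-n) = p n) (hp : Summable p)
    (α : ℝ) : (wgt p α : ℂ) = ∑' n : ℤ, (p n : ℂ) * Complex.exp (↑(n * α) * Complex.I) := by
  have hcos : Summable fun n : ℤ => p n * Real.cos (n * α) := hp.abs.of_norm_bounded fun n => by
    simpa [abs_mul] using mul_le_of_le_one_right (abs_nonneg (p n)) (abs_cos_le_one (n * α))
  have hsin : Summable fun n : ℤ => p n * Real.sin (n * α) := hp.abs.of_norm_bounded fun n => by
    simpa [abs_mul] using mul_le_of_le_one_right (abs_nonneg (p n)) (abs_sin_le_one (n * α))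
  have hodd : ∑' n : ℤ, p n * Real.sin (n * α) = 0 := by
    have h := (Equiv.neg ℤ).tsum_eq fun n : ℤ => p n * Real.sin (n * α)
    simp only [Equiv.neg_apply, hsym, Int.cast_neg, neg_mul, Real.sin_neg, mul_neg,
      tsum_neg] at h
    linarith
  simp_rw [Complex.exp_mul_I, ← Complex.ofReal_cos, ← Complex.ofReal_sin, mul_add, ← mul_assoc,
    ← Complex.ofReal_mul]
  rw [Summable.tsum_add (Complex.summable_ofReal.2 hcos)
      ((Complex.summable_ofReal.2 hsin).mul_right _),
    tsum_mul_right, ← Complex.ofReal_tsum, ← Complex.ofReal_tsum, hodd, wgt]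
  simp

theorem integral_Ioc_exp_int_mul_I (m : ℤ) :
    ∫ t in Set.Ioc (-π) π, Complex.exp (↑(m * t) * Complex.I)
      = if m = 0 then (2 * π : ℂ) else 0 := by
  rw [← intervalIntegral.integral_of_le (by linarith [pi_pos])]
  split_ifs with hm
  · simp [hm, two_mul]
  · have hc : (m : ℂ) * Complex.I ≠ 0 := by simp [hm]
    have hperiod : Complex.exp (m * Complex.I * π) = Complex.exp (m * Complex.I * (-π : ℝ)) :=
      Complex.exp_eq_exp_iff_exists_int.2 ⟨m, by push_cast; ring⟩
    simp_rw [Complex.ofReal_mul, Complex.ofReal_intCast, mul_right_comm _ _ Complex.I]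
    rw [integral_exp_mul_complex hc, hperiod, sub_self, zero_div]

instance (V : Type*) [Fintype V] : IsFiniteMeasure (torusBox V) := by
  unfold torusBox; infer_instance

theorem integral_torusBox_prod_exp {V : Type*} [Fintype V] (m : V → ℤ) :
    ∫ θ, ∏ x, Complex.exp (↑(m x * θ x) * Complex.I) ∂torusBox V
      = if m = 0 then (2 * π : ℂ) ^ Fintype.card V else 0 := by
  rw [torusBox,
    integral_fintype_prod_eq_prod fun x (t : ℝ) => Complex.exp (↑(m x * t) * Complex.I)]
  simp_rw [integral_Ioc_exp_int_mul_I, Finset.prod_ite_zero, Finset.prod_const, Finset.card_univ,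
    Finset.mem_univ, true_implies, funext_iff, Pi.zero_apply]

section Duality

variable {V E : Type*} [Fintype V] [Fintype E] [DecidableEq V] (src tgt : E → V)

theorem sum_divg_smul_eq_sum_smul_grad {R M : Type*} [Ring R] [AddCommGroup M] [Module R M]
    (n : E → R) (θ : V → M) :
    ∑ x, divg src tgt n x • θ x = ∑ e, n e • grad src tgt θ e := by
  simp only [divg, grad, sub_smul, smul_sub, Finset.sum_sub_distrib, Finset.sum_smul, ite_smul,
    zero_smul]
  rw [Finset.sum_comm, Finset.sum_comm (γ := V)]
  simp

theorem prod_exp_grad_add (n : E → ℤ) (θ : V → ℝ) (ε : E → ℝ) :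
    ∏ e, Complex.exp (↑(n e * (grad src tgt θ e + ε e)) * Complex.I)
      = Complex.exp (Complex.I * ∑ e, (n e : ℂ) * (ε e : ℂ))
        * ∏ x, Complex.exp (↑(divg src tgt n x * θ x) * Complex.I) := by
  have hadj : ∑ e, (n e : ℝ) * (grad src tgt θ e + ε e)
      = ∑ x, ((divg src tgt n x : ℤ) : ℝ) * θ x + ∑ e, (n e : ℝ) * ε e := by
    have := sum_divg_smul_eq_sum_smul_grad src tgt n θ
    simp only [zsmul_eq_mul] at this
    rw [this, ← Finset.sum_add_distrib]
    simp_rw [mul_add]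
  simp_rw [← Complex.exp_sum, ← Complex.exp_add, ← Finset.sum_mul, ← Complex.ofReal_sum, hadj]
  push_cast
  ring_nf

theorem integral_torusBox_prod_fourier_grad (c : ℤ → ℂ) (hc : Summable (‖c ·‖))
    (ε : E → ℝ) :
    ∫ θ, ∏ e, ∑' m : ℤ, c m * Complex.exp (↑(m * (grad src tgt θ e + ε e)) * Complex.I)
        ∂torusBox V
      = (2 * π : ℂ) ^ Fintype.card V * ∑' n : {n : E → ℤ // divg src tgt n = 0},
          Complex.exp (Complex.I * ∑ e, (n.1 e : ℂ) * (ε e : ℂ)) * ∏ e, c (n.1 e) := by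
  set F : (E → ℤ) → (V → ℝ) → ℂ := fun n θ =>
    ∏ e, c (n e) * Complex.exp (↑(n e * (grad src tgt θ e + ε e)) * Complex.I) with hF
  have hnorm (n : E → ℤ) (θ : V → ℝ) : ‖F n θ‖ = ∏ e, ‖c (n e)‖ := by
    simp only [F, norm_prod, norm_mul, Complex.norm_exp_ofReal_mul_I, mul_one]
  have hexpand (θ : V → ℝ) :
      ∏ e, ∑' m : ℤ, c m * Complex.exp (↑(m * (grad src tgt θ e + ε e)) * Complex.I)
        = ∑' n, F n θ :=
    (summable_norm_and_hasSum_prod _ fun e => by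
      simpa only [norm_mul, Complex.norm_exp_ofReal_mul_I, mul_one] using hc).2.tsum_eq.symm
  have hintegral (n : E → ℤ) : ∫ θ, F n θ ∂torusBox V = (2 * π : ℂ) ^ Fintype.card V *
      {n : E → ℤ | divg src tgt n = 0}.indicator
        (fun n => Complex.exp (Complex.I * ∑ e, (n e : ℂ) * (ε e : ℂ)) * ∏ e, c (n e)) n := by
    simp_rw [hF, Finset.prod_mul_distrib, prod_exp_grad_add, ← mul_assoc, integral_const_mul,
      integral_torusBox_prod_exp, Set.indicator_apply, Set.mem_ofPred_eq]
    split_ifs <;> ring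
  have hcont (n : E → ℤ) : Continuous (F n) := by
    simp only [F, grad]
    fun_prop
  have hint (n : E → ℤ) : Integrable (F n) (torusBox V) :=
    .of_bound (hcont n).aestronglyMeasurable _ (ae_of_all _ fun θ => (hnorm n θ).le)
  have hsum : Summable fun n => ∫ θ, ‖F n θ‖ ∂torusBox V := by
    simp_rw [hnorm, integral_const, smul_eq_mul]
    refine Summable.mul_left _ ?_
    exact (summable_norm_and_hasSum_prod (fun _ => c) fun _ => hc).1.congr fun n => norm_prod _ _
  rw [integral_congr_ae (ae_of_all _ hexpand), ← integral_tsum_of_summable_integral_norm hint hsum]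
  simp_rw [hintegral, tsum_mul_left]
  exact congrArg _ (tsum_subtype {n : E → ℤ | divg src tgt n = 0} _).symm

theorem tsum_divg_eq_zero_eq_integral_wgt {p : ℤ → ℝ} (hsym : ∀ n, p (-n) = p n)
    (hp : Summable p) (ε : E → ℝ) :
    ∑' n : {n : E → ℤ // divg src tgt n = 0},
        Complex.exp (Complex.I * ∑ e, (n.1 e : ℂ) * (ε e : ℂ)) * ∏ e, (p (n.1 e) : ℂ)
      = ((∫ θ, ∏ e, wgt p (grad src tgt θ e + ε e) ∂torusBox V) /
          (2 * π) ^ Fintype.card V : ℝ) := by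
  have hc : Summable fun n => ‖(p n : ℂ)‖ := by simpa only [Complex.norm_real] using hp.norm
  rw [Complex.ofReal_div, ← integral_complex_ofReal]
  simp_rw [Complex.ofReal_prod, ofReal_wgt_eq_tsum_exp hsym hp,
    integral_torusBox_prod_fourier_grad src tgt _ hc]
  push_cast
  field_simp

end Duality

theorem fourier_pontryagin_duality_star_general
    {V E : Type*} [Fintype V] [Fintype E] [DecidableEq V]
    (src tgt : E → V)
    (p : ℤ → ℝ)
    (hsym : ∀ n : ℤ, p (-n) = p n)
    (hsum : Summable fun n : ℤ => (n : ℝ) ^ 2 * p n)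
    (ε : E → ℝ) :
    (∑' n : {n : E → ℤ // divg src tgt n = 0},
        Complex.exp (Complex.I * ∑ e, (n.1 e : ℂ) * (ε e : ℂ)) * ∏ e, (p (n.1 e) : ℂ))
      = Complex.ofReal
          ((∫ θ, (∏ e, wgt p (grad src tgt θ e + ε e)) ∂ torusBox V) /
            (2 * π) ^ Fintype.card V)
    ∧
    (∑' n : {n : E → ℤ // divg src tgt n = 0},
        Complex.exp (Complex.I * ∑ e, (n.1 e : ℂ) * (ε e : ℂ)) * ∏ e, (p (n.1 e) : ℂ)) /
      (∑' n : {n : E → ℤ // divg src tgt n = 0}, ∏ e, (p (n.1 e) : ℂ))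
      = Complex.ofReal
          ((∫ θ, (∏ e, wgt p (grad src tgt θ e + ε e)) ∂ torusBox V) /
            (∫ θ, (∏ e, wgt p (grad src tgt θ e)) ∂ torusBox V)) := by
  have hp := summable_of_summable_sq_mul hsum
  have hZ₀ := tsum_divg_eq_zero_eq_integral_wgt src tgt hsym hp 0
  simp only [Pi.zero_apply, add_zero, Complex.ofReal_zero, mul_zero, Finset.sum_const_zero,
    Complex.exp_zero, one_mul] at hZ₀
  refine ⟨tsum_divg_eq_zero_eq_integral_wgt src tgt hsym hp ε, ?_⟩
  rw [tsum_divg_eq_zero_eq_integral_wgt src tgt hsym hp ε, hZ₀, ← Complex.ofReal_div,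
    div_div_div_cancel_right₀ (by positivity)]

/-- **Fourier–Pontryagin duality, spin side on vertices.**
`Σ_{n ∈ ℤ^E, d*n = 0} e^{i(n,ε)} Π_e e^{-𝒱(n_e)} = ∫_{(ℝ/2πℤ)^V} Π_e w((dθ)_e + ε_e) dθ`,
and consequently `ν_⋄[e^{i(n,ε)}] = Z_★(ε)/Z_★(0)`. -/
theorem fourier_pontryagin_duality_star
    {V E : Type*} [Fintype V] [Fintype E] [DecidableEq V]
    (src tgt : E → V)
    (p : ℤ → ℝ)
    (hsym : ∀ n : ℤ, p (-n) = p n)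
    (hnonneg : ∀ n : ℤ, 0 ≤ p n)
    (hsum : Summable fun n : ℤ => (n : ℝ) ^ 2 * p n)
    (hw : ∀ α : ℝ, 0 < wgt p α)
    (ε : E → ℝ) :
    (∑' n : {n : E → ℤ // divg src tgt n = 0},
        Complex.exp (Complex.I * ∑ e, (n.1 e : ℂ) * (ε e : ℂ)) * ∏ e, (p (n.1 e) : ℂ))
      = Complex.ofReal
          ((∫ θ, (∏ e, wgt p (grad src tgt θ e + ε e)) ∂ torusBox V) /
            (2 * π) ^ Fintype.card V)
    ∧
    (∑' n : {n : E → ℤ // divg src tgt n = 0},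
        Complex.exp (Complex.I * ∑ e, (n.1 e : ℂ) * (ε e : ℂ)) * ∏ e, (p (n.1 e) : ℂ)) /
      (∑' n : {n : E → ℤ // divg src tgt n = 0}, ∏ e, (p (n.1 e) : ℂ))
      = Complex.ofReal
          ((∫ θ, (∏ e, wgt p (grad src tgt θ e + ε e)) ∂ torusBox V) /
            (∫ θ, (∏ e, wgt p (grad src tgt θ e)) ∂ torusBox V)) :=
  fourier_pontryagin_duality_star_general src tgt p hsym hsum ε
end
end

section
/- Ginibre core inequality on the group of divergence-free circle-valued 1-forms (Lemma B.2): Let λ be the Haar probability measure of the compact group ker(d*) ⊆ (ℝ/2πℤ)^E. Then for every n ∈ ℕ, all integers m_1, …, m_n, all edges e_1, …, e_n ∈ E and all signs s_1, …, s_n ∈ {+1, −1}, ∫∫ Π_{i=1}^n ( cos(m_i J_{e_i}) + s_i cos(m_i J'_{e_i}) ) dλ(J) dλ(J') ≥ 0. -/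
/-!
Write `χ θ = e^{iθ}` and `xᵢ(J) = mᵢ J_{eᵢ}`. Expanding `cos θ = (χ θ + χ (-θ)) / 2`, the `i`-th
factor becomes a sum of four terms indexed by a pair of bits `(pᵢ, qᵢ)`, with coefficient
`sᵢ^{pᵢ} sᵢ^{qᵢ} / 2` (this uses `sᵢ² = 1`) and character `χ (hᵢ xᵢ(J) + dᵢ xᵢ(J'))`, where
`h = halfSum p q` and `d = halfDiff p q`. Translation invariance of `λ` under `ker d*` makes
`∫ χ (∑ aᵢ xᵢ) dλ` equal to `1` if `a` lies in the group `Λ` of integer relations of the `xᵢ` on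
`ker d*`, and `0` otherwise. Hence the double integral is
`2⁻ⁿ ∑_{p,q} W(p) W(q) [h ∈ Λ ∧ d ∈ Λ]` with `W(p) = ∏ sᵢ^{pᵢ}`. Modulo `Λ`, the condition
`h ∈ Λ ∧ d ∈ Λ` says `p ≡ q` and `1 ≡ 2p`, so the sum is a sum of squares
`∑_{classes} (∑_{p in the class, 1 ≡ 2p} W(p))²`.
-/

open MeasureTheory Real
noncomputable section

instance : Fact (0 < 2 * π) := ⟨by positivity⟩

/-- `Real.Angle = ℝ/2πℤ` with its Borel σ-algebra. -/
instance : MeasurableSpace Real.Angle := by unfold Real.Angle; infer_instance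

/-- `lam` is the Haar probability measure of the compact group `ker(d*) ⊆ (ℝ/2πℤ)^E`:
a probability measure carried by `ker(d*)` and invariant under translation by every element
of `ker(d*)` (these properties characterise it uniquely). -/
def IsKerHaar {V E : Type*} [Fintype E] [DecidableEq V] (src tgt : E → V)
    (lam : Measure (E → Real.Angle)) : Prop :=
  IsProbabilityMeasure lam ∧
  lam {J | divg src tgt J = 0} = 1 ∧
  ∀ J₀ : E → Real.Angle, divg src tgt J₀ = 0 →
    Measure.map (fun J => J₀ + J) lam = lam

instance : BorelSpace Real.Angle := inferInstanceAs (BorelSpace (AddCircle (2 * π)))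

instance : SecondCountableTopology Real.Angle :=
  inferInstanceAs (SecondCountableTopology (AddCircle (2 * π)))

namespace Real.Angle

theorem toCircle_eq_one_iff {θ : Angle} : θ.toCircle = 1 ↔ θ = 0 := by
  refine ⟨fun h => ?_, fun h => h ▸ toCircle_zero⟩
  simpa [h] using (arg_toCircle θ).symm

theorem coe_toCircle_sum {ι : Type*} (s : Finset ι) (f : ι → Angle) :
    ((∑ i ∈ s, f i).toCircle : ℂ) = ∏ i ∈ s, ((f i).toCircle : ℂ) := by
  induction s using Finset.cons_induction <;> simp [*]

theorem continuous_coe_toCircle : Continuous fun θ : Angle => (θ.toCircle : ℂ) :=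
  continuous_subtype_val.comp AddCircle.homeomorphCircle'.continuous

theorem coe_toCircle_add_coe_toCircle_neg (θ : Angle) :
    (θ.toCircle : ℂ) + ((-θ).toCircle : ℂ) = 2 * θ.cos := by
  simp only [coe_toCircle, cos_neg, sin_neg]
  push_cast
  ring

end Real.Angle

open Real.Angle

theorem Fintype.prod_sum_sum {ι β γ R : Type*} [Fintype ι] [DecidableEq ι] [Fintype β]
    [Fintype γ] [CommSemiring R] (f : ι → β → γ → R) :
    ∏ i, ∑ b, ∑ c, f i b c = ∑ p : ι → β, ∑ q : ι → γ, ∏ i, f i (p i) (q i) := by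
  simp_rw [← Fintype.sum_prod_type', Fintype.prod_sum]
  exact Fintype.sum_equiv (Equiv.arrowProdEquivProdArrow _ _ _) _ _ fun _ => rfl

theorem integral_integral_sum_mul {α β ι 𝕜 : Type*} [MeasurableSpace α] [MeasurableSpace β]
    [RCLike 𝕜] {μ : Measure α} {ν : Measure β} (s : Finset ι) {f : ι → α → 𝕜} {g : ι → β → 𝕜}
    (hf : ∀ i ∈ s, Integrable (f i) μ) (hg : ∀ i ∈ s, Integrable (g i) ν) :
    ∫ x, ∫ y, ∑ i ∈ s, f i x * g i y ∂ν ∂μ = ∑ i ∈ s, (∫ x, f i x ∂μ) * ∫ y, g i y ∂ν := by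
  calc _ = ∫ x, ∑ i ∈ s, f i x * ∫ y, g i y ∂ν ∂μ := by
          congr with x
          rw [integral_finsetSum _ fun i hi => (hg i hi).const_mul _]
          simp_rw [integral_const_mul]
    _ = _ := by
          rw [integral_finsetSum _ fun i hi => (hf i hi).mul_const _]
          simp_rw [integral_mul_const]

theorem sum_sum_ite_eq_mul_nonneg {α β : Type*} [Fintype α] [DecidableEq β] (g : α → β)
    (v : α → ℝ) : 0 ≤ ∑ p, ∑ q, if g p = g q then v p * v q else 0 := by
  let S (b : β) : ℝ := ∑ q with g q = b, v q
  have hfiber (b : β) : ∑ p with g p = b, v p * S (g p) = S b ^ 2 := by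
    rw [sq, Finset.sum_mul]
    exact Finset.sum_congr rfl fun p hp => by rw [(Finset.mem_filter.1 hp).2]
  have hsq : ∑ p, ∑ q, (if g p = g q then v p * v q else 0)
      = ∑ b ∈ Finset.univ.image g, S b ^ 2 := by
    rw [← Finset.sum_congr rfl fun b _ => hfiber b,
      Finset.sum_fiberwise_of_maps_to fun p _ => Finset.mem_image_of_mem g (Finset.mem_univ p)]
    simp [S, Finset.mul_sum, Finset.sum_filter, eq_comm]
  rw [hsq]
  positivity

theorem sub_sub_mem_and_sub_mem_iff {M : Type*} [AddCommGroup M] (Λ : AddSubgroup M)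
    (u b c : M) :
    u - b - c ∈ Λ ∧ c - b ∈ Λ ↔ (b : M ⧸ Λ) = c ∧ (u : M ⧸ Λ) = 2 • (b : M ⧸ Λ) := by
  simp only [← QuotientAddGroup.eq_zero_iff, QuotientAddGroup.mk_sub, sub_eq_zero, two_nsmul]
  constructor
  · rintro ⟨h1, h2⟩
    rw [sub_eq_iff_eq_add] at h1
    exact ⟨h2.symm, by rw [h1, h2]⟩
  · rintro ⟨h1, h2⟩
    exact ⟨by rw [h2, ← h1]; abel, h1.symm⟩

def integerRelations {A ι : Type*} [Fintype ι] (x : ι → A → Angle) (K : Set A) :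
    AddSubgroup (ι → ℤ) where
  carrier := {a | ∀ J ∈ K, ∑ i, a i • x i J = 0}
  add_mem' ha hb J hJ := by simp [add_smul, Finset.sum_add_distrib, ha J hJ, hb J hJ]
  zero_mem' := by simp
  neg_mem' ha J hJ := by simp [ha J hJ]

section Fourier

variable {A : Type*} [MeasurableSpace A] {μ : Measure A}

theorem integrable_coe_toCircle [IsFiniteMeasure μ] {φ : A → Angle} (hφ : Measurable φ) :
    Integrable (fun J => ((φ J).toCircle : ℂ)) μ :=
  .of_bound (continuous_coe_toCircle.measurable.comp hφ).aestronglyMeasurable 1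
    (.of_forall fun _ => (Circle.norm_coe _).le)

theorem integral_toCircle_eq_zero_of_map_add_eq [AddCommGroup A] [MeasurableAdd A]
    (φ : A →+ Angle) {J₀ : A} (hμ : μ.map (J₀ + ·) = μ) (hφ : φ J₀ ≠ 0) :
    ∫ J, ((φ J).toCircle : ℂ) ∂μ = 0 := by
  have hshift : ∫ J, ((φ J).toCircle : ℂ) ∂μ
      = (φ J₀).toCircle * ∫ J, ((φ J).toCircle : ℂ) ∂μ := by
    conv_lhs => rw [← hμ]
    rw [← MeasurableEquiv.coe_addLeft, integral_map_equiv, ← integral_const_mul]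
    simp
  have hne : ((φ J₀).toCircle : ℂ) ≠ 1 := by
    rwa [ne_eq, ← Circle.coe_one, Circle.coe_inj, toCircle_eq_one_iff]
  have hfactor : (1 - ((φ J₀).toCircle : ℂ)) * ∫ J, ((φ J).toCircle : ℂ) ∂μ = 0 := by
    rw [sub_mul, one_mul, ← hshift, sub_self]
  exact (mul_eq_zero.1 hfactor).resolve_left (sub_ne_zero.2 hne.symm)

open Classical in
theorem integral_toCircle_sum_zsmul [AddCommGroup A] [MeasurableAdd A] [IsProbabilityMeasure μ]
    {K : Set A} (hK : ∀ᵐ J ∂μ, J ∈ K) (hμ : ∀ J₀ ∈ K, μ.map (J₀ + ·) = μ) {ι : Type*}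
    [Fintype ι] (x : ι → A →+ Angle) (a : ι → ℤ) :
    ∫ J, ((∑ i, a i • x i J).toCircle : ℂ) ∂μ
      = if a ∈ integerRelations (fun i => x i) K then 1 else 0 := by
  split_ifs with ha
  · have hone : (fun J => ((∑ i, a i • x i J).toCircle : ℂ)) =ᵐ[μ] fun _ => 1 := by
      filter_upwards [hK] with J hJ
      simp [ha J hJ]
    simp [integral_congr_ae hone]
  · obtain ⟨J₀, hJ₀, hne⟩ : ∃ J₀ ∈ K, ∑ i, a i • x i J₀ ≠ 0 := by
      simpa [integerRelations] using ha
    simpa using integral_toCircle_eq_zero_of_map_add_eq (∑ i, a i • x i) (hμ J₀ hJ₀)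
      (by simpa using hne)

end Fourier

section Expansion

variable {ι : Type*}

/- For the sign vectors `σ p = 1 - 2 p`, these are `(σ p + σ q) / 2` and `(σ p - σ q) / 2`:
Ginibre's change of variables, carried out on frequencies, where nothing has to be halved. -/
def halfSum (p q : ι → Bool) : ι → ℤ := 1 - Bool.toInt ∘ p - Bool.toInt ∘ q

def halfDiff (p q : ι → Bool) : ι → ℤ := Bool.toInt ∘ q - Bool.toInt ∘ p

/- The four terms are `e^{ix}`, `s² e^{-ix}`, `s e^{iy}` and `s e^{-iy}`. -/
theorem cos_add_mul_cos_eq_sum (x y : Angle) {s : ℝ} (hs : s ^ 2 = 1) :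
    ((x.cos + s * y.cos : ℝ) : ℂ) = ∑ b : Bool, ∑ c : Bool,
      ((2⁻¹ * s ^ b.toNat * s ^ c.toNat : ℝ) : ℂ) * ((1 - b.toInt - c.toInt) • x).toCircle
        * ((c.toInt - b.toInt) • y).toCircle := by
  have hx := coe_toCircle_add_coe_toCircle_neg x
  have hy := coe_toCircle_add_coe_toCircle_neg y
  have hs' : (s : ℂ) ^ 2 = 1 := by exact_mod_cast hs
  simp [-toCircle_neg]
  linear_combination (-2⁻¹ : ℂ) * hx - 2⁻¹ * s * hy - 2⁻¹ * ((-x).toCircle : ℂ) * hs'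

theorem prod_cos_add_mul_cos_eq_sum [Fintype ι] [DecidableEq ι] (x y : ι → Angle) {s : ι → ℝ}
    (hs : ∀ i, s i ^ 2 = 1) :
    ((∏ i, ((x i).cos + s i * (y i).cos) : ℝ) : ℂ) = ∑ p : ι → Bool, ∑ q : ι → Bool,
      ((2⁻¹ ^ Fintype.card ι * (∏ i, s i ^ (p i).toNat) * ∏ i, s i ^ (q i).toNat : ℝ) : ℂ)
        * (∑ i, halfSum p q i • x i).toCircle * (∑ i, halfDiff p q i • y i).toCircle := by
  rw [Complex.ofReal_prod,
    Finset.prod_congr rfl fun i _ => cos_add_mul_cos_eq_sum (x i) (y i) (hs i),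
    Fintype.prod_sum_sum]
  refine Fintype.sum_congr _ _ fun p => Fintype.sum_congr _ _ fun q => ?_
  simp [Finset.prod_mul_distrib, coe_toCircle_sum, halfSum, halfDiff]

variable {A : Type*} [MeasurableSpace A] (μ : Measure A) [Fintype ι] [DecidableEq ι]

theorem ofReal_integral_integral_prod_cos_add_mul_cos [IsFiniteMeasure μ] {x : ι → A → Angle}
    (hx : ∀ i, Measurable (x i)) {s : ι → ℝ} (hs : ∀ i, s i ^ 2 = 1) :
    ((∫ J, ∫ J', ∏ i, ((x i J).cos + s i * (x i J').cos) ∂μ ∂μ : ℝ) : ℂ)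
      = ∑ p : ι → Bool, ∑ q : ι → Bool,
        ((2⁻¹ ^ Fintype.card ι * (∏ i, s i ^ (p i).toNat) * ∏ i, s i ^ (q i).toNat : ℝ) : ℂ)
          * (∫ J, ((∑ i, halfSum p q i • x i J).toCircle : ℂ) ∂μ)
          * ∫ J, ((∑ i, halfDiff p q i • x i J).toCircle : ℂ) ∂μ := by
  have hmeas (a : ι → ℤ) : Measurable fun J => ∑ i, a i • x i J :=
    Finset.measurable_sum _ fun i _ => (hx i).const_smul (a i)
  simp_rw [← integral_complex_ofReal, prod_cos_add_mul_cos_eq_sum _ _ hs,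
    ← Fintype.sum_prod_type']
  rw [integral_integral_sum_mul _ (fun z _ => (integrable_coe_toCircle (hmeas _)).const_mul _)
    fun z _ => integrable_coe_toCircle (hmeas _)]
  simp_rw [integral_const_mul]

open Classical in
theorem integral_integral_prod_cos_add_mul_cos [AddCommGroup A] [MeasurableAdd A]
    [IsProbabilityMeasure μ] {K : Set A} (hK : ∀ᵐ J ∂μ, J ∈ K)
    (hμ : ∀ J₀ ∈ K, μ.map (J₀ + ·) = μ) (x : ι → A →+ Angle) (hx : ∀ i, Measurable (x i))
    {s : ι → ℝ} (hs : ∀ i, s i ^ 2 = 1) :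
    ∫ J, ∫ J', ∏ i, ((x i J).cos + s i * (x i J').cos) ∂μ ∂μ
      = 2⁻¹ ^ Fintype.card ι * ∑ p : ι → Bool, ∑ q : ι → Bool,
        if halfSum p q ∈ integerRelations (fun i => x i) K
            ∧ halfDiff p q ∈ integerRelations (fun i => x i) K
          then (∏ i, s i ^ (p i).toNat) * ∏ i, s i ^ (q i).toNat else 0 := by
  refine Complex.ofReal_injective ?_
  rw [ofReal_integral_integral_prod_cos_add_mul_cos μ hx hs, Finset.mul_sum]
  simp only [integral_toCircle_sum_zsmul hK hμ, Finset.mul_sum]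
  push_cast
  refine Fintype.sum_congr _ _ fun p => Fintype.sum_congr _ _ fun q => ?_
  by_cases hsum : halfSum p q ∈ integerRelations (fun i => x i) K <;>
    by_cases hdiff : halfDiff p q ∈ integerRelations (fun i => x i) K <;>
    simp [hsum, hdiff, mul_assoc]

end Expansion

open Classical in
theorem sum_sum_ite_halfSum_mem_and_halfDiff_mem_nonneg {ι : Type*} [Fintype ι] [DecidableEq ι]
    (Λ : AddSubgroup (ι → ℤ)) (W : (ι → Bool) → ℝ) :
    0 ≤ ∑ p, ∑ q, if halfSum p q ∈ Λ ∧ halfDiff p q ∈ Λ then W p * W q else 0 := by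
  let g (p : ι → Bool) : (ι → ℤ) ⧸ Λ := (Bool.toInt ∘ p : ι → ℤ)
  let u : (ι → ℤ) ⧸ Λ := (1 : ι → ℤ)
  let v (p : ι → Bool) : ℝ := if u = 2 • g p then W p else 0
  have hterm (p q : ι → Bool) : (if halfSum p q ∈ Λ ∧ halfDiff p q ∈ Λ then W p * W q else 0)
      = if g p = g q then v p * v q else 0 := by
    have hiff : halfSum p q ∈ Λ ∧ halfDiff p q ∈ Λ ↔ g p = g q ∧ u = 2 • g p :=
      sub_sub_mem_and_sub_mem_iff Λ _ _ _
    by_cases hpq : g p = g q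
    · simp only [hiff, v, hpq, true_and, if_true]
      split_ifs <;> simp
    · simp [hiff, hpq]
  simp_rw [hterm]
  exact sum_sum_ite_eq_mul_nonneg g v

theorem continuous_divg {V E G : Type*} [Fintype E] [DecidableEq V] [AddCommGroup G]
    [TopologicalSpace G] [IsTopologicalAddGroup G] (src tgt : E → V) :
    Continuous (divg (G := G) src tgt) :=
  continuous_pi fun _ => .sub
    (continuous_finsetSum _ fun e _ => .if_const _ (continuous_apply e) continuous_const)
    (continuous_finsetSum _ fun e _ => .if_const _ (continuous_apply e) continuous_const)

theorem ginibre_core_inequality_general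
    {V E : Type*} [Fintype E] [DecidableEq V]
    (src tgt : E → V)
    (lam : Measure (E → Real.Angle)) (hlam : IsKerHaar src tgt lam)
    (n : ℕ) (m : Fin n → ℤ) (es : Fin n → E) (s : Fin n → ℝ)
    (hs : ∀ i, s i = 1 ∨ s i = -1) :
    0 ≤ ∫ J, ∫ J', ∏ i,
          (Real.Angle.cos (m i • J (es i)) + s i * Real.Angle.cos (m i • J' (es i)))
        ∂ lam ∂ lam := by
  obtain ⟨hprob, hker, hinv⟩ := hlam
  let x (i : Fin n) : (E → Angle) →+ Angle :=
    (zsmulAddGroupHom (m i)).comp (Pi.evalAddMonoidHom _ (es i))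
  have hx (i : Fin n) : Measurable (x i) :=
    (continuous_zsmul (m i)).measurable.comp (measurable_pi_apply (es i))
  have hK : ∀ᵐ J ∂lam, J ∈ {J | divg src tgt J = 0} :=
    (mem_ae_iff_prob_eq_one
      (isClosed_eq (continuous_divg src tgt) continuous_const).measurableSet).2 hker
  have hs2 (i : Fin n) : s i ^ 2 = 1 := by rcases hs i with h | h <;> simp [h]
  change 0 ≤ ∫ J, ∫ J', ∏ i, ((x i J).cos + s i * (x i J').cos) ∂lam ∂lam
  rw [integral_integral_prod_cos_add_mul_cos lam hK hinv x hx hs2]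
  exact mul_nonneg (by positivity) (sum_sum_ite_halfSum_mem_and_halfDiff_mem_nonneg _ _)

/-- **Ginibre core inequality on the group of divergence-free circle-valued 1-forms.**
For all integers `m_i`, edges `e_i` and signs `s_i ∈ {±1}`:
`∫∫ Π_i (cos(m_i J_{e_i}) + s_i cos(m_i J'_{e_i})) dλ(J) dλ(J') ≥ 0`. -/
theorem ginibre_core_inequality
    {V E : Type*} [Fintype V] [Fintype E] [DecidableEq V]
    (src tgt : E → V)
    (lam : Measure (E → Real.Angle)) (hlam : IsKerHaar src tgt lam)
    (n : ℕ) (m : Fin n → ℤ) (es : Fin n → E) (s : Fin n → ℝ)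
    (hs : ∀ i, s i = 1 ∨ s i = -1) :
    0 ≤ ∫ J, ∫ J', ∏ i,
          (Real.Angle.cos (m i • J (es i)) + s i * Real.Angle.cos (m i • J' (es i)))
        ∂ lam ∂ lam :=
  ginibre_core_inequality_general src tgt lam hlam n m es s hs
end
end

section
/- Convexity of the XY height-function potential / Turán inequality (content of Lemma 5.3): For β > 0 and k ∈ ℤ let I_k(β) := (1/2π)∫_{−π}^{π} e^{β cos t} cos(kt) dt. Then I_k(β) > 0 for every k, and the function k ↦ −log I_{|k|}(β) is convex on ℤ; equivalently, for every integer k, I_k(β)² ≥ I_{k−1}(β) · I_{k+1}(β). -/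
open MeasureTheory Real
noncomputable section

/-- The modified Bessel function of the first kind of integer order `k`:
`I_k(β) = (1/2π) ∫_{-π}^{π} e^{β cos t} cos(kt) dt`. -/
def besselI (k : ℤ) (β : ℝ) : ℝ :=
  (1 / (2 * π)) * ∫ t in Set.Ioc (-π) π, Real.exp (β * Real.cos t) * Real.cos (k * t)

/-!
Expanding `exp (β cos t)` in powers of `cos t` and integrating term by term, with
`∫ cos^j t cos (k t) dt = 2π 2^{-j} · #{±1-walks of length j from 0 to k}`, gives the classical
series `I_k(β) = ∑ₙ (β/2)^{2n+k} / (n! (n+k)!)` for `k ≥ 0`; for `β > 0` every term is positive.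
By the Cauchy product and Vandermonde's identity,
`I_a I_b = ∑_N (β/2)^{2N+a+b} C(2N+a+b, N) / ((N+a)! (N+b)!)`, so the series of `I_k I_{k+2}` and
of `I_{k+1}²` differ termwise only through `(N+k+1)!² ≤ (N+k)! (N+k+2)!`. The remaining case of the
Turán inequality, `I_1² ≤ I_0²`, follows from `|cos (k t)| ≤ 1` under the integral.
-/

open scoped Nat

/-- The number of `±1`-walks of length `j` from `0` to `k`. -/
def walkCount (j : ℕ) (k : ℤ) : ℕ :=
  if (j + k.natAbs) % 2 = 0 then j.choose ((j + k.natAbs) / 2) else 0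

lemma walkCount_zero (k : ℤ) : walkCount 0 k = if k = 0 then 1 else 0 := by
  rcases eq_or_ne k 0 with rfl | hk
  · simp [walkCount]
  · simp only [walkCount, zero_add, if_neg hk]
    split_ifs
    · exact Nat.choose_eq_zero_of_lt (by omega)
    · rfl

lemma walkCount_neg (j : ℕ) (k : ℤ) : walkCount j (-k) = walkCount j k := by
  simp [walkCount]

lemma walkCount_succ_natCast (j n : ℕ) :
    walkCount (j + 1) n = walkCount j (n - 1) + walkCount j (n + 1) := by
  rcases n with _ | n
  · rw [Nat.cast_zero, zero_sub, walkCount_neg, zero_add]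
    simp only [walkCount, Int.natAbs_zero, Int.natAbs_one, add_zero]
    rcases Nat.even_or_odd j with ⟨s, rfl⟩ | ⟨s, rfl⟩
    · rw [if_neg (by omega), if_neg (by omega)]
    · rw [if_pos (by omega), if_pos (by omega), show (2 * s + 1 + 1) / 2 = s + 1 by omega,
        Nat.choose_succ_succ, Nat.choose_symm_half]
  · have h₁ : ((n + 1 : ℕ) - 1 : ℤ).natAbs = n := by omega
    have h₂ : ((n + 1 : ℕ) + 1 : ℤ).natAbs = n + 2 := by omega
    simp only [walkCount, Int.natAbs_natCast, h₁, h₂]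
    rcases Nat.even_or_odd (j + n) with ⟨s, hs⟩ | ⟨s, hs⟩
    · rw [if_pos (by omega), if_pos (by omega), if_pos (by omega),
        show (j + 1 + (n + 1)) / 2 = s + 1 by omega, show (j + n) / 2 = s by omega,
        show (j + (n + 2)) / 2 = s + 1 by omega, Nat.choose_succ_succ]
    · rw [if_neg (by omega), if_neg (by omega), if_neg (by omega)]

lemma walkCount_succ (j : ℕ) (k : ℤ) :
    walkCount (j + 1) k = walkCount j (k - 1) + walkCount j (k + 1) := by
  obtain ⟨n, rfl | rfl⟩ := k.eq_nat_or_neg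
  · exact walkCount_succ_natCast j n
  · rw [walkCount_neg, walkCount_succ_natCast, add_comm, ← walkCount_neg j (-n - 1),
      ← walkCount_neg j (-n + 1)]
    ring_nf

lemma walkCount_two_mul_add (n k : ℕ) :
    walkCount (2 * n + k) k = (2 * n + k).choose (n + k) := by
  simp only [walkCount, Int.natAbs_natCast]
  rw [if_pos (by omega), show (2 * n + k + k) / 2 = n + k by omega]

lemma exists_two_mul_add_of_walkCount_ne_zero {j k : ℕ} (h : walkCount j k ≠ 0) :
    ∃ n, 2 * n + k = j := by
  simp only [walkCount, Int.natAbs_natCast] at h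
  split_ifs at h with hparity
  · have hle := Nat.choose_eq_zero_iff.not.mp h
    exact ⟨(j - k) / 2, by omega⟩
  · exact absurd rfl h

lemma integral_cos_int_mul (k : ℤ) :
    ∫ t in -π..π, cos (k * t) = if k = 0 then 2 * π else 0 := by
  rcases eq_or_ne k 0 with rfl | hk
  · simp only [Int.cast_zero, zero_mul, cos_zero, intervalIntegral.integral_const,
      sub_neg_eq_add, smul_eq_mul, mul_one, if_true]
    ring
  · have hk' : (k : ℝ) ≠ 0 := Int.cast_ne_zero.mpr hk
    simp [hk, intervalIntegral.integral_comp_mul_left cos hk', sin_int_mul_pi]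

lemma integral_cos_pow_mul_cos_int_mul (j : ℕ) (k : ℤ) :
    ∫ t in -π..π, cos t ^ j * cos (k * t) = 2 * π * walkCount j k / 2 ^ j := by
  induction j generalizing k with
  | zero => simp [integral_cos_int_mul, walkCount_zero]
  | succ j ih =>
    have product_to_sum : ∀ t : ℝ, cos t ^ (j + 1) * cos (k * t) =
        (cos t ^ j * cos ((k - 1 : ℤ) * t) + cos t ^ j * cos ((k + 1 : ℤ) * t)) / 2 := by
      intro t
      push_cast
      rw [sub_mul, add_mul, one_mul, cos_sub, cos_add]
      ring
    have hint (m : ℤ) : IntervalIntegrable (fun t ↦ cos t ^ j * cos (m * t)) volume (-π) π :=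
      (by fun_prop : Continuous _).intervalIntegrable _ _
    simp_rw [product_to_sum]
    rw [intervalIntegral.integral_div, intervalIntegral.integral_add (hint _) (hint _), ih, ih,
      walkCount_succ]
    push_cast
    ring

lemma besselI_eq_intervalIntegral (k : ℤ) (β : ℝ) :
    besselI k β = (∫ t in -π..π, exp (β * cos t) * cos (k * t)) / (2 * π) := by
  rw [besselI, intervalIntegral.integral_of_le (by linarith [pi_pos]), one_div_mul_eq_div]

lemma hasSum_besselI_walkCount (k : ℤ) (β : ℝ) :
    HasSum (fun j : ℕ ↦ β ^ j / j ! * walkCount j k / 2 ^ j) (besselI k β) := by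
  have termwise : HasSum (fun j : ℕ ↦ ∫ t in -π..π, β ^ j / j ! * (cos t ^ j * cos (k * t)))
      (∫ t in -π..π, exp (β * cos t) * cos (k * t)) := by
    refine intervalIntegral.hasSum_integral_of_dominated_convergence (fun j _ ↦ |β| ^ j / j !)
      (fun j ↦ (by fun_prop : Continuous _).aestronglyMeasurable)
      (fun j ↦ .of_forall fun t _ ↦ ?_)
      (.of_forall fun _ _ ↦ Real.summable_pow_div_factorial |β|) intervalIntegrable_const
      (.of_forall fun t _ ↦ ?_)
    · have hcos : |cos t| ^ j * |cos (k * t)| ≤ 1 :=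
        mul_le_one₀ (pow_le_one₀ (abs_nonneg _) (abs_cos_le_one _)) (abs_nonneg _)
          (abs_cos_le_one _)
      simpa [abs_mul, abs_div, abs_pow] using
        mul_le_of_le_one_right (by positivity : 0 ≤ |β| ^ j / j !) hcos
    · rw [exp_eq_exp_ℝ]
      exact ((NormedSpace.expSeries_div_hasSum_exp (β * cos t)).mul_right _).congr_fun
        fun j ↦ by ring
  rw [besselI_eq_intervalIntegral]
  refine (termwise.div_const (2 * π)).congr_fun fun j ↦ ?_
  rw [intervalIntegral.integral_const_mul, integral_cos_pow_mul_cos_int_mul]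
  field_simp

def besselTerm (k : ℕ) (x : ℝ) (n : ℕ) : ℝ := x ^ (2 * n + k) / (n ! * (n + k)!)

lemma besselTerm_pos (k n : ℕ) {x : ℝ} (hx : 0 < x) : 0 < besselTerm k x n := by
  unfold besselTerm; positivity

lemma norm_besselTerm (k n : ℕ) (x : ℝ) : ‖besselTerm k x n‖ = besselTerm k |x| n := by
  simp [besselTerm]

lemma hasSum_besselTerm (k : ℕ) (β : ℝ) : HasSum (besselTerm k (β / 2)) (besselI k β) := by
  have hinj : Function.Injective fun n : ℕ ↦ 2 * n + k := fun a b h ↦ by simp only at h; omega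
  refine ((hinj.hasSum_iff fun j hj ↦ ?_).mpr (hasSum_besselI_walkCount k β)).congr_fun
    fun n ↦ ?_
  · have : walkCount j k = 0 := by
      by_contra h
      exact hj (exists_two_mul_add_of_walkCount_ne_zero h)
    simp [this]
  · have hfac := Nat.add_choose_mul_factorial_mul_factorial n (n + k)
    rw [show n + (n + k) = 2 * n + k by ring] at hfac
    have hchoose : 0 < ((2 * n + k).choose (n + k) : ℝ) := by
      exact_mod_cast Nat.choose_pos (by omega)
    simp only [Function.comp_apply, walkCount_two_mul_add, besselTerm, ← hfac]
    push_cast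
    field_simp
    rw [← mul_pow, div_mul_cancel₀ β two_ne_zero]

lemma summable_norm_besselTerm (k : ℕ) (x : ℝ) : Summable fun n ↦ ‖besselTerm k x n‖ := by
  simp_rw [norm_besselTerm]
  simpa using (hasSum_besselTerm k (2 * |x|)).summable

lemma besselI_neg (k : ℤ) (β : ℝ) : besselI (-k) β = besselI k β := by
  simp [besselI]

lemma besselI_pos (k : ℤ) {β : ℝ} (hβ : 0 < β) : 0 < besselI k β := by
  have hβ' : 0 < β / 2 := half_pos hβ
  suffices h : ∀ n : ℕ, 0 < besselI n β by
    obtain ⟨n, rfl | rfl⟩ := k.eq_nat_or_neg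
    · exact h n
    · rw [besselI_neg]; exact h n
  exact fun n ↦ hasSum_lt (f := 0) (i := 0) (fun m ↦ (besselTerm_pos n m hβ').le)
    (besselTerm_pos n 0 hβ') hasSum_zero (hasSum_besselTerm n β)

lemma abs_besselI_le_besselI_zero (k : ℤ) (β : ℝ) : |besselI k β| ≤ besselI 0 β := by
  have hint (m : ℤ) : IntervalIntegrable (fun t ↦ exp (β * cos t) * cos (m * t)) volume (-π) π :=
    (by fun_prop : Continuous _).intervalIntegrable _ _
  rw [besselI_eq_intervalIntegral, besselI_eq_intervalIntegral, abs_div,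
    abs_of_pos (by positivity : 0 < 2 * π)]
  gcongr
  calc |∫ t in -π..π, exp (β * cos t) * cos (k * t)|
      ≤ ∫ t in -π..π, |exp (β * cos t) * cos (k * t)| :=
        intervalIntegral.abs_integral_le_integral_abs (by linarith [pi_pos])
    _ ≤ ∫ t in -π..π, exp (β * cos t) * cos ((0 : ℤ) * t) := by
        refine intervalIntegral.integral_mono_on (by linarith [pi_pos]) (hint k).abs (hint 0)
          fun t _ ↦ ?_
        rw [abs_mul, abs_of_pos (exp_pos _), Int.cast_zero, zero_mul, cos_zero, mul_one]
        exact mul_le_of_le_one_right (exp_pos _).le (abs_cos_le_one _)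

open Finset in
lemma sum_antidiagonal_besselTerm_mul (a b N : ℕ) (x : ℝ) :
    ∑ p ∈ antidiagonal N, besselTerm a x p.1 * besselTerm b x p.2 =
      x ^ (2 * N + a + b) * (2 * N + a + b).choose N / ((N + a)! * (N + b)!) := by
  have term : ∀ p ∈ antidiagonal N, besselTerm a x p.1 * besselTerm b x p.2 =
      x ^ (2 * N + a + b) * ((N + b).choose p.1 * (N + a).choose p.2 : ℕ) /
        ((N + a)! * (N + b)!) := by
    rintro ⟨m, j⟩ hmj
    obtain rfl : m + j = N := mem_antidiagonal.mp hmj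
    have h₁ := Nat.add_choose_mul_factorial_mul_factorial (j + b) m
    have h₂ := Nat.add_choose_mul_factorial_mul_factorial (m + a) j
    rw [show j + b + m = m + j + b by ring] at h₁
    rw [show m + a + j = m + j + a by ring] at h₂
    have c₁ : 0 < ((m + j + b).choose m : ℝ) := by exact_mod_cast Nat.choose_pos (by omega)
    have c₂ : 0 < ((m + j + a).choose j : ℝ) := by exact_mod_cast Nat.choose_pos (by omega)
    simp only [besselTerm, ← h₁, ← h₂]
    push_cast
    field_simp
    ring
  rw [sum_congr rfl term, ← sum_div, ← mul_sum, ← Nat.cast_sum, ← Nat.add_choose_eq,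
    show N + b + (N + a) = 2 * N + a + b by ring]

lemma hasSum_besselI_mul (a b : ℕ) (β : ℝ) :
    HasSum (fun N ↦ (β / 2) ^ (2 * N + a + b) * (2 * N + a + b).choose N / ((N + a)! * (N + b)!))
      (besselI a β * besselI b β) := by
  have ha := summable_norm_besselTerm a (β / 2)
  have hb := summable_norm_besselTerm b (β / 2)
  rw [← (hasSum_besselTerm a β).tsum_eq, ← (hasSum_besselTerm b β).tsum_eq,
    tsum_mul_tsum_eq_tsum_sum_antidiagonal_of_summable_norm ha hb]
  simpa only [sum_antidiagonal_besselTerm_mul] using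
    (summable_norm_sum_mul_antidiagonal_of_summable_norm ha hb).of_norm.hasSum

lemma factorial_succ_mul_factorial_succ_le (n : ℕ) : (n + 1)! * (n + 1)! ≤ n ! * (n + 2)! := by
  calc (n + 1)! * (n + 1)! = (n + 1) * n ! * (n + 1)! := by rw [Nat.factorial_succ]
    _ ≤ (n + 2) * n ! * (n + 1)! := by gcongr; omega
    _ = n ! * (n + 2)! := by rw [Nat.factorial_succ (n + 1)]; ring

lemma besselI_mul_besselI_add_two_le_sq (k : ℕ) (β : ℝ) :
    besselI k β * besselI (k + 2 : ℕ) β ≤ besselI (k + 1 : ℕ) β ^ 2 := by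
  rw [sq]
  refine hasSum_le (fun N ↦ ?_) (hasSum_besselI_mul k (k + 2) β)
    (hasSum_besselI_mul (k + 1) (k + 1) β)
  have hfac : ((N + (k + 1))! * (N + (k + 1))! : ℝ) ≤ (N + k)! * (N + (k + 2))! := by
    exact_mod_cast factorial_succ_mul_factorial_succ_le (N + k)
  rw [show 2 * N + k + (k + 2) = 2 * (N + k + 1) by ring,
    show 2 * N + (k + 1) + (k + 1) = 2 * (N + k + 1) by ring, pow_mul]
  exact div_le_div_of_nonneg_left (by positivity) (by positivity) hfac

lemma besselI_natCast_sub_one_mul_add_one_le_sq (m : ℕ) (β : ℝ) :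
    besselI (m - 1) β * besselI (m + 1) β ≤ besselI m β ^ 2 := by
  rcases m with _ | n
  · rw [Nat.cast_zero, zero_sub, besselI_neg, zero_add, ← sq, sq_le_sq]
    exact (abs_besselI_le_besselI_zero 1 β).trans (le_abs_self _)
  · convert besselI_mul_besselI_add_two_le_sq n β using 3 <;> push_cast <;> ring

theorem besselI_sub_one_mul_add_one_le_sq (k : ℤ) (β : ℝ) :
    besselI (k - 1) β * besselI (k + 1) β ≤ besselI k β ^ 2 := by
  obtain ⟨m, rfl | rfl⟩ := k.eq_nat_or_neg
  · exact besselI_natCast_sub_one_mul_add_one_le_sq m β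
  · rw [show -(m : ℤ) - 1 = -(m + 1) by ring, show -(m : ℤ) + 1 = -(m - 1) by ring,
      besselI_neg, besselI_neg, besselI_neg, mul_comm]
    exact besselI_natCast_sub_one_mul_add_one_le_sq m β

/-- **Positivity and convexity (Turán inequality) of the XY height-function potential.**
For `β > 0`, `I_k(β) > 0` for every `k ∈ ℤ`, and `k ↦ -log I_{|k|}(β)` is convex on ℤ;
equivalently `I_{k-1}(β) I_{k+1}(β) ≤ I_k(β)²` for every integer `k`. -/
theorem besselI_pos_and_turan (β : ℝ) (hβ : 0 < β) :
    (∀ k : ℤ, 0 < besselI k β) ∧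
    (∀ k : ℤ, besselI (k - 1) β * besselI (k + 1) β ≤ (besselI k β) ^ 2) :=
  ⟨fun k ↦ besselI_pos k hβ, fun k ↦ besselI_sub_one_mul_add_one_le_sq k β⟩
end
end

section
/- GFF covariance for the gradient projection of the spin field (Proposition 6.1, diagonal case): Assume G is connected with boundary vertex ∂. Under μ_★ (spins θ: V → ℝ/2πℤ with θ_∂ = 0), let J := dθ and let τ = τ(θ) be the unique function V → ℝ with τ_∂ = 0 and dτ = P_★(𝒰'(J)), where P_★ is the orthogonal projection of ℝ^E onto the subspace Im(d) of gradients and 𝒰'(J) := (𝒰'(J_e))_{e∈E}. Then for every f: V → ℝ with f_∂ = 0, (inf_{e∈E} μ_★[𝒰''(J_e)]) · (f, Δ^{-1}f) ≤ μ_★[(τ, f)²] ≤ (sup_{e∈E} μ_★[𝒰''(J_e)]) · (f, Δ^{-1}f), where (τ,f) = Σ_v τ_v f_v, Δ = d*d is the graph Laplacian acting on functions vanishing at ∂, and Δ^{-1} is its inverse on that space. -/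
open MeasureTheory Real
noncomputable section

/-- Connectivity of the (multi)graph encoded by `src, tgt : E → V`. -/
def IsConn {V E : Type*} (src tgt : E → V) : Prop :=
  ∀ x y : V, Relation.ReflTransGen
    (fun a b => ∃ e, (src e = a ∧ tgt e = b) ∨ (src e = b ∧ tgt e = a)) x y

/-- The dual spin potential `𝒰 = -log w`. -/
def spinU (p : ℤ → ℝ) : ℝ → ℝ := fun t => -Real.log (wgt p t)

/-- Coordinates for spin configurations `θ : V → ℝ/2πℤ` pinned at the boundary vertex
(`θ_∂ = 0`): the product of a Dirac mass at `0` in the `∂`-coordinate and of Lebesgue measure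
on the fundamental domain `(-π, π]` in every other coordinate. -/
def pinnedBox (V : Type*) [Fintype V] [DecidableEq V] (bd : V) : Measure (V → ℝ) :=
  Measure.pi fun v => if v = bd then Measure.dirac (0 : ℝ) else volume.restrict (Set.Ioc (-π) π)

/-- Expectation with respect to the pinned spin measure `μ_★(dθ) ∝ Π_e w((dθ)_e) dθ`
on `{θ : V → ℝ/2πℤ : θ_∂ = 0}` (normalising constants cancel in the ratio). -/
def pinnedSpinExp {V E : Type*} [Fintype V] [Fintype E] [DecidableEq V]
    (src tgt : E → V) (bd : V) (p : ℤ → ℝ) (F : (V → ℝ) → ℝ) : ℝ :=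
  (∫ θ, F θ * ∏ e, wgt p (grad src tgt θ e) ∂ pinnedBox V bd) /
    ∫ θ, ∏ e, wgt p (grad src tgt θ e) ∂ pinnedBox V bd

/-!
Write `H(θ) = Σ_e 𝒰(J_e)`, so that `μ_★` has density `e^{-H}`, and let `A = Σ_e 𝒰'(J_e) (dg)_e`
be the derivative of `H` in the direction of `g = Δ⁻¹f`. Summation by parts and the defining
property of `τ` give `(τ, f) = A`. Since `g_∂ = 0`, translating `θ` by `t g` preserves the pinned
Haar measure, so `∫ ∂_g (A e^{-H}) = 0`, that is `μ_★[A²] = μ_★[∂_g A] = Σ_e (dg)_e² μ_★[𝒰''(J_e)]`.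
As `Σ_e (dg)_e² = (f, Δ⁻¹f)`, the bounds follow by comparing each `μ_★[𝒰''(J_e)]` with their
infimum and supremum.
-/

theorem summable_abs_pow_mul_abs_of_le {a : ℤ → ℝ} {j k : ℕ}
    (ha : Summable fun n : ℤ => (n : ℝ) ^ k * a n) (hjk : j ≤ k) :
    Summable fun n : ℤ => |(n : ℝ)| ^ j * |a n| := by
  refine Summable.of_norm_bounded_eventually (summable_abs_iff.2 ha) ?_
  filter_upwards [(Set.finite_singleton (0 : ℤ)).compl_mem_cofinite] with n hn
  have h1 : 1 ≤ |(n : ℝ)| := by exact_mod_cast Int.one_le_abs hn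
  rw [Real.norm_eq_abs, abs_mul, abs_mul, abs_abs, abs_pow, abs_pow, abs_abs]
  gcongr

theorem contDiff_tsum_mul_cos {a : ℤ → ℝ} {k : ℕ}
    (ha : Summable fun n : ℤ => (n : ℝ) ^ k * a n) :
    ContDiff ℝ k fun x => ∑' n : ℤ, a n * Real.cos (n * x) := by
  refine contDiff_tsum (f := fun (n : ℤ) (x : ℝ) => a n * Real.cos (n * x))
    (v := fun j n => |(n : ℝ)| ^ j * |a n|) (fun n => by fun_prop)
    (fun j hj => summable_abs_pow_mul_abs_of_le ha (by exact_mod_cast hj)) fun j n x _ => ?_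
  rw [norm_iteratedFDeriv_eq_norm_iteratedDeriv, iteratedDeriv_const_mul _ (by fun_prop),
    iteratedDeriv_comp_const_mul Real.contDiff_cos, Real.norm_eq_abs, abs_mul, abs_mul, abs_pow,
    mul_comm]
  gcongr
  exact mul_le_of_le_one_right (by positivity) (Real.abs_iteratedDeriv_cos_le_one _ _)

theorem periodic_wgt (p : ℤ → ℝ) : Function.Periodic (wgt p) (2 * π) := fun x => by
  refine tsum_congr fun n => ?_
  rw [show (n : ℝ) * (x + 2 * π) = n * x + n * (2 * π) by ring, Real.cos_add_int_mul_two_pi]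

section SpinPotential

variable {p : ℤ → ℝ}

theorem contDiff_spinU (hsum : Summable fun n : ℤ => (n : ℝ) ^ 2 * p n)
    (hw : ∀ α : ℝ, 0 < wgt p α) : ContDiff ℝ 2 (spinU p) :=
  ((contDiff_tsum_mul_cos hsum).log fun α => (hw α).ne').neg

theorem periodic_spinU : Function.Periodic (spinU p) (2 * π) := fun x => by
  simp only [spinU, periodic_wgt p x]

theorem exp_neg_spinU {α : ℝ} (hα : 0 < wgt p α) : Real.exp (-spinU p α) = wgt p α := by
  rw [spinU, neg_neg, Real.exp_log hα]

end SpinPotential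

theorem Function.Periodic.deriv {f : ℝ → ℝ} {c : ℝ} (hf : Function.Periodic f c) :
    Function.Periodic (deriv f) c := fun x => by
  rw [← deriv_comp_add_const, hf.funext]

theorem toIocMod_eq_add_int_mul {T : ℝ} (hT : 0 < T) (a x : ℝ) :
    toIocMod hT a x = x + ((-toIocDiv hT a x : ℤ) : ℝ) * T := by
  have h := toIocMod_sub_self hT a x
  rw [zsmul_eq_mul] at h
  push_cast at h ⊢
  linarith

theorem measurePreserving_toIocMod_add {T : ℝ} (hT : 0 < T) (a c : ℝ) :
    MeasurePreserving (fun x => toIocMod hT a (x + c))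
      (volume.restrict (Set.Ioc a (a + T))) (volume.restrict (Set.Ioc a (a + T))) := by
  have : Fact (0 < T) := ⟨hT⟩
  -- the rotation by `c` of `ℝ/Tℤ`, read in the fundamental domain `(a, a + T]`
  have h := (measurePreserving_subtype_coe measurableSet_Ioc).comp
    (AddCircle.measurePreserving_equivIoc T (a := a) |>.comp
      ((measurePreserving_add_right volume (c : AddCircle T)).comp
        (AddCircle.measurePreserving_mk T a)))
  convert h using 1
  funext x
  simp only [Function.comp_apply, AddCircle.equivIoc, ← AddCircle.coe_add,
    QuotientAddGroup.equivIocMod_coe]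

section PinnedBox

variable {V : Type*} [DecidableEq V]

def pinnedBoxFactor (bd v : V) : Measure ℝ :=
  if v = bd then Measure.dirac 0 else volume.restrict (Set.Ioc (-π) π)

instance (bd v : V) : IsFiniteMeasure (pinnedBoxFactor bd v) := by
  unfold pinnedBoxFactor
  split_ifs <;> infer_instance

variable [Fintype V]

theorem pinnedBox_eq_pi (bd : V) : pinnedBox V bd = Measure.pi (pinnedBoxFactor bd) := rfl

instance (bd : V) : IsFiniteMeasure (pinnedBox V bd) := by
  rw [pinnedBox_eq_pi]
  infer_instance

end PinnedBox

/-- Functions on the torus `(ℝ/2πℤ)^V`, lifted to `V → ℝ`. -/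
def TwoPiPeriodic {V : Type*} (F : (V → ℝ) → ℝ) : Prop :=
  ∀ (θ : V → ℝ) (m : V → ℤ), F (fun v => θ v + m v * (2 * π)) = F θ

namespace TwoPiPeriodic

variable {V : Type*} {F F' : (V → ℝ) → ℝ} {g : V → ℝ}

theorem exists_bound (hF : TwoPiPeriodic F) (hc : Continuous F) : ∃ C, ∀ θ, |F θ| ≤ C := by
  obtain ⟨C, hC⟩ := (isCompact_univ_pi fun _ : V => isCompact_Icc (a := -π) (b := π))
    |>.exists_bound_of_continuousOn hc.continuousOn
  refine ⟨C, fun θ => ?_⟩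
  have hmem (v : V) : toIocMod two_pi_pos (-π) (θ v) ∈ Set.Icc (-π) π := by
    obtain ⟨h₁, h₂⟩ := toIocMod_mem_Ioc two_pi_pos (-π) (θ v)
    exact ⟨h₁.le, by linarith⟩
  rw [← hF θ fun v => -toIocDiv two_pi_pos (-π) (θ v), ← Real.norm_eq_abs]
  exact hC _ fun v _ => toIocMod_eq_add_int_mul two_pi_pos (-π) (θ v) ▸ hmem v

theorem of_hasDerivAt_shift (hF : TwoPiPeriodic F)
    (hderiv : ∀ θ, HasDerivAt (fun t : ℝ => F (θ + t • g)) (F' θ) 0) : TwoPiPeriodic F' := by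
  intro θ m
  have h : (fun t : ℝ => F ((fun v => θ v + m v * (2 * π)) + t • g))
      = fun t => F (θ + t • g) := funext fun t => by
    rw [← hF (θ + t • g) m]
    congr 1
    funext v
    simp only [Pi.add_apply, Pi.smul_apply, smul_eq_mul]
    ring
  exact (hderiv _).unique (h ▸ hderiv θ)

variable [Fintype V] [DecidableEq V] {bd : V}

theorem integrable (hF : TwoPiPeriodic F) (hc : Continuous F) :
    Integrable F (pinnedBox V bd) := by
  obtain ⟨C, hC⟩ := hF.exists_bound hc
  exact (integrable_const C).mono' hc.aestronglyMeasurable (ae_of_all _ hC)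

theorem integral_comp_add (hF : TwoPiPeriodic F) (hm : Measurable F) {c : V → ℝ}
    (hc : c bd = 0) : ∫ θ, F (θ + c) ∂pinnedBox V bd = ∫ θ, F θ ∂pinnedBox V bd := by
  -- Coordinatewise, `wrap` preserves the factor measures and differs from `θ + c` by `2πℤ^V`.
  set wrap : V → ℝ → ℝ := fun v x => toIocMod two_pi_pos (-π) (x + c v)
  have hmp (v : V) :
      MeasurePreserving (wrap v) (pinnedBoxFactor bd v) (pinnedBoxFactor bd v) := by
    have h := measurePreserving_toIocMod_add two_pi_pos (-π) (c v)
    rw [show -π + 2 * π = π by ring] at h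
    unfold pinnedBoxFactor
    split_ifs with hv
    · refine ⟨h.measurable, ?_⟩
      rw [Measure.map_dirac' h.measurable, hv, hc, add_zero,
        (toIocMod_eq_self two_pi_pos).2 ⟨by linarith [pi_pos], by linarith [pi_pos]⟩]
    · exact h
  have hpi : MeasurePreserving (fun θ v => wrap v (θ v)) (pinnedBox V bd) (pinnedBox V bd) :=
    measurePreserving_pi (pinnedBoxFactor bd) (pinnedBoxFactor bd) hmp
  calc ∫ θ, F (θ + c) ∂pinnedBox V bd = ∫ θ, F (fun v => wrap v (θ v)) ∂pinnedBox V bd := by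
        refine integral_congr_ae (ae_of_all _ fun θ => ?_)
        simp only [wrap, toIocMod_eq_add_int_mul]
        exact (hF _ _).symm
    _ = ∫ θ, F θ ∂pinnedBox V bd := by
        rw [← integral_map hpi.measurable.aemeasurable
          (hpi.map_eq ▸ hm.aestronglyMeasurable), hpi.map_eq]

theorem integral_eq_zero_of_hasDerivAt_shift (hF : TwoPiPeriodic F) (hFc : Continuous F)
    (hF'c : Continuous F') (hg : g bd = 0)
    (hderiv : ∀ θ, HasDerivAt (fun t : ℝ => F (θ + t • g)) (F' θ) 0) :
    ∫ θ, F' θ ∂pinnedBox V bd = 0 := by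
  obtain ⟨C, hC⟩ := (hF.of_hasDerivAt_shift hderiv).exists_bound hF'c
  have hshift (θ : V → ℝ) (t : ℝ) :
      HasDerivAt (fun s : ℝ => F (θ + s • g)) (F' (θ + t • g)) t := by
    have h := HasDerivAt.comp_sub_const (f := fun s : ℝ => F (θ + t • g + s • g)) t t
      (by rw [sub_self]; exact hderiv _)
    have e : (fun s : ℝ => F (θ + t • g + (s - t) • g)) = fun s => F (θ + s • g) :=
      funext fun s => by rw [add_assoc, ← add_smul, add_sub_cancel]
    exact e ▸ h
  have hconst : (fun t : ℝ => ∫ θ, F (θ + t • g) ∂pinnedBox V bd)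
      = fun _ => ∫ θ, F θ ∂pinnedBox V bd :=
    funext fun t => hF.integral_comp_add hFc.measurable (by simp [hg])
  have hcont (t : ℝ) : Continuous fun θ : V → ℝ => θ + t • g :=
    continuous_id.add continuous_const
  have hdiff := hasDerivAt_integral_of_dominated_loc_of_deriv_le (μ := pinnedBox V bd)
    (F := fun t θ => F (θ + t • g)) (F' := fun t θ => F' (θ + t • g)) (x₀ := 0)
    (bound := fun _ => C) Filter.univ_mem
    (Filter.Eventually.of_forall fun t => (hFc.comp (hcont t)).aestronglyMeasurable)
    (by simpa using hF.integrable hFc) (hF'c.comp (hcont 0)).aestronglyMeasurable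
    (ae_of_all _ fun θ t _ => hC _) (integrable_const C)
    (ae_of_all _ fun θ t _ => hshift θ t)
  rw [hconst] at hdiff
  simpa using hdiff.2.unique (hasDerivAt_const 0 _)

theorem integral_sq_mul_exp_neg {H A A' : (V → ℝ) → ℝ} (hH : TwoPiPeriodic H)
    (hHc : Continuous H) (hAc : Continuous A) (hA'c : Continuous A') (hg : g bd = 0)
    (hHA : ∀ θ, HasDerivAt (fun t : ℝ => H (θ + t • g)) (A θ) 0)
    (hAA' : ∀ θ, HasDerivAt (fun t : ℝ => A (θ + t • g)) (A' θ) 0) :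
    ∫ θ, A θ ^ 2 * exp (-H θ) ∂pinnedBox V bd = ∫ θ, A' θ * exp (-H θ) ∂pinnedBox V bd := by
  have hA := hH.of_hasDerivAt_shift hHA
  have hA' := hA.of_hasDerivAt_shift hAA'
  have hderiv (θ : V → ℝ) : HasDerivAt (fun t : ℝ => A (θ + t • g) * exp (-H (θ + t • g)))
      (A' θ * exp (-H θ) - A θ ^ 2 * exp (-H θ)) 0 := by
    refine ((hAA' θ).fun_mul (hHA θ).fun_neg.exp).congr_deriv ?_
    simp only [zero_smul, add_zero]
    ring
  have hzero := integral_eq_zero_of_hasDerivAt_shift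
    (F := fun θ => A θ * exp (-H θ)) (F' := fun θ => A' θ * exp (-H θ) - A θ ^ 2 * exp (-H θ))
    (fun θ m => by simp only [hA θ m, hH θ m])
    (hAc.mul hHc.neg.rexp) ((hA'c.mul hHc.neg.rexp).sub ((hAc.pow 2).mul hHc.neg.rexp))
    hg hderiv
  rw [integral_sub, sub_eq_zero] at hzero
  · exact hzero.symm
  · exact integrable (fun θ m => by simp only [hA' θ m, hH θ m]) (hA'c.mul hHc.neg.rexp)
  · exact integrable (fun θ m => by simp only [hA θ m, hH θ m]) ((hAc.pow 2).mul hHc.neg.rexp)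

end TwoPiPeriodic

section Graph

variable {V E : Type*} {src tgt : E → V} {φ : ℝ → ℝ}

theorem grad_add_smul (θ g : V → ℝ) (t : ℝ) (e : E) :
    grad src tgt (θ + t • g) e = grad src tgt θ e + t * grad src tgt g e := by
  simp only [grad, Pi.add_apply, Pi.smul_apply, smul_eq_mul]
  ring

theorem continuous_comp_grad (hφ : Continuous φ) (e : E) :
    Continuous fun θ : V → ℝ => φ (grad src tgt θ e) :=
  hφ.comp ((continuous_apply _).sub (continuous_apply _))

theorem twoPiPeriodic_comp_grad (hφ : Function.Periodic φ (2 * π)) (e : E) :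
    TwoPiPeriodic fun θ : V → ℝ => φ (grad src tgt θ e) := fun θ m => by
  have h : grad src tgt (fun v => θ v + m v * (2 * π)) e
      = grad src tgt θ e + ((m (tgt e) - m (src e) : ℤ) : ℝ) * (2 * π) := by
    simp only [grad]
    push_cast
    ring
  simp only [h, hφ.int_mul _ _]

variable [Fintype E]

theorem sum_grad_mul [Fintype V] [DecidableEq V] (h : V → ℝ) (ω : E → ℝ) :
    ∑ e, grad src tgt h e * ω e = ∑ v, h v * divg src tgt ω v := by
  have key (a : E → V) : ∑ e, h (a e) * ω e = ∑ v, h v * ∑ e, if a e = v then ω e else 0 := by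
    simp only [Finset.mul_sum, mul_ite, mul_zero]
    rw [Finset.sum_comm]
    exact Finset.sum_congr rfl fun e _ => by simp
  simp only [grad, divg, sub_mul, mul_sub, Finset.sum_sub_distrib, key]

theorem sum_mul_eq_sum_grad_mul_grad [Fintype V] [DecidableEq V] {f g h : V → ℝ} {bd : V}
    (hh : h bd = 0) (hgreen : ∀ x : V, x ≠ bd → divg src tgt (grad src tgt g) x = f x) :
    ∑ v, h v * f v = ∑ e, grad src tgt h e * grad src tgt g e := by
  rw [sum_grad_mul]
  refine Finset.sum_congr rfl fun v _ => ?_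
  rcases eq_or_ne v bd with rfl | hv
  · simp [hh]
  · rw [hgreen v hv]

variable (src tgt) in
def edgeSum (c : E → ℝ) (φ : ℝ → ℝ) (θ : V → ℝ) : ℝ :=
  ∑ e, c e * φ (grad src tgt θ e)

theorem continuous_edgeSum (hφ : Continuous φ) (c : E → ℝ) :
    Continuous (edgeSum src tgt c φ) :=
  continuous_finsetSum _ fun e _ => continuous_const.mul (continuous_comp_grad hφ e)

theorem twoPiPeriodic_edgeSum (hφ : Function.Periodic φ (2 * π)) (c : E → ℝ) :
    TwoPiPeriodic (edgeSum src tgt c φ) := fun θ m => by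
  simp only [edgeSum, twoPiPeriodic_comp_grad hφ _ θ m]

theorem hasDerivAt_edgeSum_add_smul {φ' : ℝ → ℝ} (hφ : ∀ x, HasDerivAt φ (φ' x) x)
    (c : E → ℝ) (θ g : V → ℝ) :
    HasDerivAt (fun t : ℝ => edgeSum src tgt c φ (θ + t • g))
      (edgeSum src tgt (c * grad src tgt g) φ' θ) 0 := by
  simp only [edgeSum, grad_add_smul, Pi.mul_apply]
  refine HasDerivAt.fun_sum fun e _ => ?_
  have hJ : HasDerivAt (fun t : ℝ => grad src tgt θ e + t * grad src tgt g e)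
      (grad src tgt g e) 0 := by
    simpa using ((hasDerivAt_id (0 : ℝ)).mul_const (grad src tgt g e)).const_add (grad src tgt θ e)
  rw [mul_right_comm, mul_assoc]
  exact ((hφ (grad src tgt θ e)).comp_of_eq 0 hJ (by simp)).const_mul (c e)

theorem integral_edgeSum_mul {μ : Measure (V → ℝ)} (c : E → ℝ) {G : (V → ℝ) → ℝ}
    (hint : ∀ e, Integrable (fun θ => φ (grad src tgt θ e) * G θ) μ) :
    ∫ θ, edgeSum src tgt c φ θ * G θ ∂μ = ∑ e, c e * ∫ θ, φ (grad src tgt θ e) * G θ ∂μ := by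
  simp only [edgeSum, Finset.sum_mul, mul_assoc]
  rw [integral_finsetSum _ fun e _ => (hint e).const_mul (c e)]
  simp only [integral_const_mul]

end Graph

section Gibbs

variable {V E : Type*} [Fintype V] [Fintype E] [DecidableEq V] {src tgt : E → V} {bd : V}
  {U : ℝ → ℝ}

theorem integral_sq_mul_exp_neg_edgeSum (hU : ContDiff ℝ 2 U)
    (hper : Function.Periodic U (2 * π)) {g : V → ℝ} (hg : g bd = 0) :
    ∫ θ, edgeSum src tgt (grad src tgt g) (deriv U) θ ^ 2 * exp (-edgeSum src tgt 1 U θ)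
        ∂pinnedBox V bd
      = ∑ e, grad src tgt g e ^ 2 * ∫ θ, deriv (deriv U) (grad src tgt θ e)
          * exp (-edgeSum src tgt 1 U θ) ∂pinnedBox V bd := by
  obtain ⟨hU₀, -, hU₁⟩ := contDiff_succ_iff_deriv (n := 1) |>.1 hU
  obtain ⟨hU₁', -, hU₂⟩ := contDiff_succ_iff_deriv (n := 0) |>.1 hU₁
  have hHc : Continuous (edgeSum src tgt 1 U) := continuous_edgeSum hU₀.continuous 1
  rw [TwoPiPeriodic.integral_sq_mul_exp_neg (twoPiPeriodic_edgeSum hper 1) hHc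
    (continuous_edgeSum hU₁'.continuous _) (continuous_edgeSum hU₂.continuous _) hg
    (fun θ => by simpa only [one_mul] using
      hasDerivAt_edgeSum_add_smul (fun x => (hU₀ x).hasDerivAt) 1 θ g)
    (hasDerivAt_edgeSum_add_smul (fun x => (hU₁' x).hasDerivAt) (grad src tgt g) · g)]
  rw [integral_edgeSum_mul _ fun e => TwoPiPeriodic.integrable
    (F := fun θ => deriv (deriv U) (grad src tgt θ e) * exp (-edgeSum src tgt 1 U θ))
    (fun θ m => by
      simp only [twoPiPeriodic_comp_grad hper.deriv.deriv e θ m, twoPiPeriodic_edgeSum hper 1 θ m])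
    ((continuous_comp_grad hU₂.continuous e).mul hHc.neg.rexp)]
  simp only [Pi.mul_apply, sq]

end Gibbs

theorem iInf_mul_sum_le_sum_mul {ι : Type*} [Fintype ι] {w : ι → ℝ} (hw : ∀ i, 0 ≤ w i)
    (x : ι → ℝ) : (⨅ i, x i) * ∑ i, w i ≤ ∑ i, w i * x i := by
  rw [Finset.mul_sum]
  refine Finset.sum_le_sum fun i _ => ?_
  rw [mul_comm (w i)]
  exact mul_le_mul_of_nonneg_right (ciInf_le (Set.finite_range x).bddBelow i) (hw i)

theorem sum_mul_le_iSup_mul_sum {ι : Type*} [Fintype ι] {w : ι → ℝ} (hw : ∀ i, 0 ≤ w i)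
    (x : ι → ℝ) : ∑ i, w i * x i ≤ (⨆ i, x i) * ∑ i, w i := by
  rw [Finset.mul_sum]
  refine Finset.sum_le_sum fun i _ => ?_
  rw [mul_comm (w i)]
  exact mul_le_mul_of_nonneg_right (le_ciSup (Set.finite_range x).bddAbove i) (hw i)

theorem gff_covariance_of_projection_general
    {V E : Type*} [Fintype V] [Fintype E] [DecidableEq V]
    (src tgt : E → V) (bd : V)
    (p : ℤ → ℝ)
    (hsum : Summable fun n : ℤ => (n : ℝ) ^ 2 * p n)
    (hw : ∀ α : ℝ, 0 < wgt p α)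
    (τ : (V → ℝ) → V → ℝ)
    (hτbd : ∀ θ, τ θ bd = 0)
    (hτproj : ∀ (θ : V → ℝ) (g : V → ℝ),
      ∑ e, (deriv (spinU p) (grad src tgt θ e) - grad src tgt (τ θ) e) * grad src tgt g e = 0)
    (f g : V → ℝ) (hg : g bd = 0)
    (hgreen : ∀ x : V, x ≠ bd → divg src tgt (grad src tgt g) x = f x) :
    (⨅ e : E, pinnedSpinExp src tgt bd p
        (fun θ => deriv (deriv (spinU p)) (grad src tgt θ e))) * (∑ v, f v * g v)
      ≤ pinnedSpinExp src tgt bd p (fun θ => (∑ v, τ θ v * f v) ^ 2)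
    ∧ pinnedSpinExp src tgt bd p (fun θ => (∑ v, τ θ v * f v) ^ 2)
      ≤ (⨆ e : E, pinnedSpinExp src tgt bd p
          (fun θ => deriv (deriv (spinU p)) (grad src tgt θ e))) * (∑ v, f v * g v) := by
  have hdensity (θ : V → ℝ) :
      ∏ e, wgt p (grad src tgt θ e) = exp (-edgeSum src tgt 1 (spinU p) θ) := by
    simp only [edgeSum, Pi.one_apply, one_mul, ← Finset.sum_neg_distrib, Real.exp_sum,
      exp_neg_spinU (hw _)]
  have hτf (θ : V → ℝ) :
      ∑ v, τ θ v * f v = edgeSum src tgt (grad src tgt g) (deriv (spinU p)) θ := by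
    have h := hτproj θ g
    simp only [sub_mul, Finset.sum_sub_distrib, sub_eq_zero] at h
    rw [sum_mul_eq_sum_grad_mul_grad (hτbd θ) hgreen, ← h, edgeSum]
    exact Finset.sum_congr rfl fun e _ => mul_comm _ _
  have hfg : ∑ v, f v * g v = ∑ e, grad src tgt g e ^ 2 := by
    simp_rw [mul_comm (f _), sum_mul_eq_sum_grad_mul_grad hg hgreen, sq]
  have hcov : pinnedSpinExp src tgt bd p (fun θ => (∑ v, τ θ v * f v) ^ 2)
      = ∑ e, grad src tgt g e ^ 2 * pinnedSpinExp src tgt bd p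
          (fun θ => deriv (deriv (spinU p)) (grad src tgt θ e)) := by
    simp only [pinnedSpinExp, hdensity, hτf, integral_sq_mul_exp_neg_edgeSum
      (contDiff_spinU hsum hw) periodic_spinU hg, Finset.sum_div, mul_div_assoc]
  rw [hcov, hfg]
  exact ⟨iInf_mul_sum_le_sum_mul (fun e => sq_nonneg _) _,
    sum_mul_le_iSup_mul_sum (fun e => sq_nonneg _) _⟩

/-- **GFF covariance for the gradient projection of the spin field.**
Let `τ(θ)` vanish at `∂` and satisfy `dτ(θ) = P_★(𝒰'(dθ))`, `P_★` being the orthogonal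
projection of `ℝ^E` onto the space of gradients (this is encoded by requiring that the
residual `𝒰'(J) - dτ` is orthogonal to every gradient).  Then for every `f` vanishing at `∂`,
`(inf_e μ_★[𝒰''(J_e)]) (f, Δ⁻¹f) ≤ μ_★[(τ,f)²] ≤ (sup_e μ_★[𝒰''(J_e)]) (f, Δ⁻¹f)`,
where `Δ⁻¹ f` is encoded by `g` vanishing at `∂` with `Δg = f` off `∂`. -/
theorem gff_covariance_of_projection
    {V E : Type*} [Fintype V] [Fintype E] [DecidableEq V] [Nonempty E]
    (src tgt : E → V) (hconn : IsConn src tgt) (bd : V)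
    (p : ℤ → ℝ)
    (hsym : ∀ n : ℤ, p (-n) = p n)
    (hnonneg : ∀ n : ℤ, 0 ≤ p n)
    (hsum : Summable fun n : ℤ => (n : ℝ) ^ 2 * p n)
    (hw : ∀ α : ℝ, 0 < wgt p α)
    (τ : (V → ℝ) → V → ℝ)
    (hτbd : ∀ θ, τ θ bd = 0)
    (hτproj : ∀ (θ : V → ℝ) (g : V → ℝ),
      ∑ e, (deriv (spinU p) (grad src tgt θ e) - grad src tgt (τ θ) e) * grad src tgt g e = 0)
    (f g : V → ℝ) (hf : f bd = 0) (hg : g bd = 0)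
    (hgreen : ∀ x : V, x ≠ bd → divg src tgt (grad src tgt g) x = f x) :
    (⨅ e : E, pinnedSpinExp src tgt bd p
        (fun θ => deriv (deriv (spinU p)) (grad src tgt θ e))) * (∑ v, f v * g v)
      ≤ pinnedSpinExp src tgt bd p (fun θ => (∑ v, τ θ v * f v) ^ 2)
    ∧ pinnedSpinExp src tgt bd p (fun θ => (∑ v, τ θ v * f v) ^ 2)
      ≤ (⨆ e : E, pinnedSpinExp src tgt bd p
          (fun θ => deriv (deriv (spinU p)) (grad src tgt θ e))) * (∑ v, f v * g v) :=
  gff_covariance_of_projection_general src tgt bd p hsum hw τ hτbd hτproj f g hg hgreen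
end
end
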